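/- Let 𝓑 = Σ_{i,j=1}^n p_{ij} A_i ⊗ B_j be a bipartite correlation Bell operator, and suppose Q is a constant such that tr(ρ𝓑) ≤ Q for all states ρ and all choices of observables A_i, B_j with spectrum in [−1,1]. Let W be an observable on Bob's Hilbert space with spectrum in [−1,1] that anticommutes with every B_j. Then tr(ρ𝓑) ≤ Q·√(1 − (tr(ρW))²). -/

import Mathlib

/-!
The Bell operator `X` and `Y = 1 ⊗ W` are Hermitian and anticommute, so for real `α, β`
`(α X + β Y)² = α² X² + β² Y² ≤ α² Q² + β²`; here `X² ≤ Q²` because `±X` have expectation at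
most `Q` in every state (applying the hypothesis to `B` and `-B`), which bounds every eigenvalue
of `X`. Since `⟨M⟩² ≤ ⟨M²⟩` in any state, `(α x + β y)² ≤ α² Q² + β²` for the expectations
`x = ⟨X⟩`, `y = ⟨Y⟩`, and the choice `α = x`, `β = Q² y` yields `x² ≤ Q² (1 - y²)`.
-/

open Matrix Kronecker ComplexOrder

namespace Matrix

variable {k : Type*} [Fintype k] [DecidableEq k]

open scoped MatrixOrder in
theorem PosSemidef.trace_mul_nonneg {ρ N : Matrix k k ℂ} (hρ : ρ.PosSemidef)
    (hN : N.PosSemidef) : 0 ≤ (ρ * N).trace := by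
  obtain ⟨C, rfl⟩ := CStarAlgebra.nonneg_iff_eq_star_mul_self.mp hN.nonneg
  rw [← Matrix.mul_assoc, trace_mul_cycle, star_eq_conjTranspose]
  exact (hρ.mul_mul_conjTranspose_same C).trace_nonneg

theorem PosSemidef.re_trace_mul_le {ρ N : Matrix k k ℂ} {c : ℝ} (hρ : ρ.PosSemidef)
    (hρtr : ρ.trace = 1) (h : (c • 1 - N).PosSemidef) : (ρ * N).trace.re ≤ c := by
  have := (Complex.nonneg_iff.mp (hρ.trace_mul_nonneg h)).1
  simp only [Matrix.mul_sub, trace_sub, Matrix.mul_smul, Matrix.mul_one, trace_smul, hρtr,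
    Complex.sub_re, Complex.real_smul, Complex.mul_re] at this
  simpa [sub_nonneg] using this

theorem PosSemidef.sq_re_trace_mul_le {ρ M : Matrix k k ℂ} (hρ : ρ.PosSemidef)
    (hρtr : ρ.trace = 1) (hM : M.IsHermitian) :
    (ρ * M).trace.re ^ 2 ≤ (ρ * (M * M)).trace.re := by
  set m := (ρ * M).trace.re
  have hN : (M - m • 1).IsHermitian := hM.sub (isHermitian_one.smul (IsSelfAdjoint.all m))
  have := (Complex.nonneg_iff.mp
    (hρ.trace_mul_nonneg (hN.eq ▸ posSemidef_conjTranspose_mul_self (M - m • 1)))).1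
  simp only [Matrix.mul_sub, Matrix.sub_mul, Matrix.mul_smul, Matrix.smul_mul, Matrix.one_mul,
    trace_sub, trace_smul, hρtr, Complex.sub_re, Complex.real_smul, Complex.mul_re,
    Complex.ofReal_re, Complex.ofReal_im, zero_mul, sub_zero, mul_one] at this
  nlinarith

theorem IsHermitian.exists_re_trace_mul_eq_eigenvalues {M : Matrix k k ℂ} (hM : M.IsHermitian)
    (i : k) : ∃ σ : Matrix k k ℂ, σ.PosSemidef ∧ σ.trace = 1 ∧
      (σ * M).trace.re = hM.eigenvalues i := by
  set v : k → ℂ := ⇑(hM.eigenvectorBasis i)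
  have hv : v ⬝ᵥ star v = 1 := (hM.eigenvectorBasis).inner_eq_one i
  refine ⟨vecMulVec v (star v), posSemidef_vecMulVec_self_star v, by rw [trace_vecMulVec, hv], ?_⟩
  rw [vecMulVec_mul, trace_vecMulVec, dotProduct_comm, ← dotProduct_mulVec,
    hM.mulVec_eigenvectorBasis, dotProduct_smul, dotProduct_comm, hv]
  simp

open scoped MatrixOrder in
theorem IsHermitian.posSemidef_sq_smul_one_sub_mul_self {M : Matrix k k ℂ} (hM : M.IsHermitian)
    {c : ℝ} (h : ∀ i, |hM.eigenvalues i| ≤ c) : (c ^ 2 • 1 - M * M).PosSemidef := by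
  have hf : cfc (fun x : ℝ => c ^ 2 - x ^ 2) M = c ^ 2 • 1 - M * M := by
    rw [cfc_sub .., cfc_const .., cfc_pow .., cfc_id' ..]
    simp [Algebra.algebraMap_eq_smul_one, sq]
  rw [← hf, ← nonneg_iff_posSemidef]
  refine cfc_nonneg fun x hx => ?_
  obtain ⟨i, rfl⟩ := hM.spectrum_real_eq_range_eigenvalues ▸ hx
  simpa using sq_le_sq' (abs_le.mp (h i)).1 (abs_le.mp (h i)).2

end Matrix

theorem smul_add_smul_mul_self_of_anticommute {S R : Type*} [CommRing S] [Ring R] [Algebra S R]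
    {x y : R} (h : x * y + y * x = 0) (α β : S) :
    (α • x + β • y) * (α • x + β • y) = α ^ 2 • (x * x) + β ^ 2 • (y * y) := by
  have expand : (α • x + β • y) * (α • x + β • y)
      = α ^ 2 • (x * x) + β ^ 2 • (y * y) + (α * β) • (x * y + y * x) := by
    simp only [add_mul, mul_add, smul_mul_smul_comm, smul_add, mul_comm β α, sq]
    abel
  rw [expand, h, smul_zero, add_zero]

theorem sq_le_sq_mul_one_sub_sq_of_forall {x y c : ℝ}
    (h : ∀ α β : ℝ, (α * x + β * y) ^ 2 ≤ α ^ 2 * c ^ 2 + β ^ 2) :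
    x ^ 2 ≤ c ^ 2 * (1 - y ^ 2) := by
  have := h x (c ^ 2 * y)
  nlinarith [sq_nonneg x, sq_nonneg (c * y), sq_nonneg c]

section Anticommuting

variable {k : Type*} [Fintype k] [DecidableEq k] {X Y ρ : Matrix k k ℂ}

theorem sq_re_trace_mul_add_le_of_anticommute (hX : X.IsHermitian) (hY : Y.IsHermitian)
    (hXY : X * Y + Y * X = 0) {c : ℝ} (hXc : (c ^ 2 • 1 - X * X).PosSemidef)
    (hY1 : (1 - Y * Y).PosSemidef) (hρ : ρ.PosSemidef) (hρtr : ρ.trace = 1) (α β : ℝ) :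
    (α * (ρ * X).trace.re + β * (ρ * Y).trace.re) ^ 2 ≤ α ^ 2 * c ^ 2 + β ^ 2 := by
  have hM : (α • X + β • Y).IsHermitian :=
    (hX.smul (IsSelfAdjoint.all α)).add (hY.smul (IsSelfAdjoint.all β))
  have hM2 : ((α ^ 2 * c ^ 2 + β ^ 2) • 1 - (α • X + β • Y) * (α • X + β • Y)).PosSemidef := by
    rw [smul_add_smul_mul_self_of_anticommute hXY,
      show (α ^ 2 * c ^ 2 + β ^ 2) • (1 : Matrix k k ℂ) - (α ^ 2 • (X * X) + β ^ 2 • (Y * Y))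
        = α ^ 2 • (c ^ 2 • 1 - X * X) + β ^ 2 • (1 - Y * Y) by
      simp only [smul_sub, smul_smul, add_smul]; abel]
    exact (hXc.smul (sq_nonneg α)).add (hY1.smul (sq_nonneg β))
  have hlin : (ρ * (α • X + β • Y)).trace.re = α * (ρ * X).trace.re + β * (ρ * Y).trace.re := by
    simp [Matrix.mul_add, trace_add]
  rw [← hlin]
  exact (hρ.sq_re_trace_mul_le hρtr hM).trans (hρ.re_trace_mul_le hρtr hM2)

theorem re_trace_mul_le_mul_sqrt_of_anticommute (hX : X.IsHermitian) (hY : Y.IsHermitian)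
    (hXY : X * Y + Y * X = 0) {c : ℝ}
    (hXc : ∀ σ : Matrix k k ℂ, σ.PosSemidef → σ.trace = 1 → |(σ * X).trace.re| ≤ c)
    (hY1 : (1 - Y * Y).PosSemidef) (hρ : ρ.PosSemidef) (hρtr : ρ.trace = 1) :
    (ρ * X).trace.re ≤ c * √(1 - (ρ * Y).trace.re ^ 2) := by
  have hc : 0 ≤ c := (abs_nonneg _).trans (hXc ρ hρ hρtr)
  have hX2 : (c ^ 2 • 1 - X * X).PosSemidef := hX.posSemidef_sq_smul_one_sub_mul_self fun i => by
    obtain ⟨σ, hσ, hσtr, hσX⟩ := hX.exists_re_trace_mul_eq_eigenvalues i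
    exact hσX ▸ hXc σ hσ hσtr
  have key := sq_le_sq_mul_one_sub_sq_of_forall
    (sq_re_trace_mul_add_le_of_anticommute hX hY hXY hX2 hY1 hρ hρtr)
  calc (ρ * X).trace.re ≤ |(ρ * X).trace.re| := le_abs_self _
    _ ≤ √(c ^ 2 * (1 - (ρ * Y).trace.re ^ 2)) := Real.abs_le_sqrt key
    _ = c * √(1 - (ρ * Y).trace.re ^ 2) := by rw [Real.sqrt_mul (sq_nonneg c), Real.sqrt_sq hc]

end Anticommuting

theorem Matrix.IsHermitian.kronecker {l m : Type*} {A : Matrix l l ℂ} {B : Matrix m m ℂ}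
    (hA : A.IsHermitian) (hB : B.IsHermitian) : (A ⊗ₖ B).IsHermitian := by
  rw [IsHermitian, conjTranspose_kronecker, hA.eq, hB.eq]

theorem Matrix.PosSemidef.one_sub_one_kronecker_mul_self {l m : Type*} [Fintype l] [Fintype m]
    [DecidableEq l] [DecidableEq m] {W : Matrix m m ℂ} (hW : (1 - W * W).PosSemidef) :
    (1 - ((1 : Matrix l l ℂ) ⊗ₖ W) * ((1 : Matrix l l ℂ) ⊗ₖ W)).PosSemidef := by
  have h : (1 : Matrix l l ℂ) ⊗ₖ (1 - W * W) = 1 - (1 ⊗ₖ W) * (1 ⊗ₖ W) := by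
    rw [← mul_kronecker_mul, Matrix.one_mul, ← one_kronecker_one, eq_sub_iff_add_eq,
      ← kronecker_add, sub_add_cancel]
  exact h ▸ PosSemidef.one.kronecker hW

section Bell

variable {ι κ l m : Type*} [Fintype ι] [Fintype κ]

noncomputable def bellOperator (p : ι → κ → ℝ) (A : ι → Matrix l l ℂ) (B : κ → Matrix m m ℂ) :
    Matrix (l × m) (l × m) ℂ :=
  ∑ i, ∑ j, p i j • (A i ⊗ₖ B j)

variable (p : ι → κ → ℝ) {A : ι → Matrix l l ℂ} {B : κ → Matrix m m ℂ}

theorem isHermitian_bellOperator (hA : ∀ i, (A i).IsHermitian) (hB : ∀ j, (B j).IsHermitian) :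
    (bellOperator p A B).IsHermitian :=
  isSelfAdjoint_sum _ fun i _ => isSelfAdjoint_sum _ fun j _ =>
    ((hA i).kronecker (hB j)).smul (IsSelfAdjoint.all (p i j))

theorem bellOperator_neg_right : bellOperator p A (fun j => -B j) = -bellOperator p A B := by
  have h : ∀ i j, A i ⊗ₖ (-B j) = -(A i ⊗ₖ B j) := fun i j =>
    eq_neg_of_add_eq_zero_left (by rw [← kronecker_add, neg_add_cancel, kronecker_zero])
  simp only [bellOperator, h, smul_neg, Finset.sum_neg_distrib]

theorem bellOperator_mul_add_mul_eq_zero [Fintype l] [Fintype m] [DecidableEq l]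
    {W : Matrix m m ℂ} (h : ∀ j, W * B j + B j * W = 0) :
    bellOperator p A B * (1 ⊗ₖ W) + (1 ⊗ₖ W) * bellOperator p A B = 0 := by
  simp only [bellOperator, Finset.sum_mul, Finset.mul_sum, ← Finset.sum_add_distrib]
  refine Finset.sum_eq_zero fun i _ => Finset.sum_eq_zero fun j _ => ?_
  rw [smul_mul_assoc, mul_smul_comm, ← smul_add, ← mul_kronecker_mul, ← mul_kronecker_mul,
    Matrix.one_mul, Matrix.mul_one, ← kronecker_add, add_comm, h, kronecker_zero, smul_zero]

end Bell

/-- Theorem 2 of the paper: if Q bounds the quantum value of the correlation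
Bell operator 𝓑 = Σ pᵢⱼ Aᵢ⊗Bⱼ, and W is an observable on Bob's side that
anticommutes with every Bⱼ, then tr(ρ𝓑) ≤ Q √(1 − tr(ρ(1⊗W))²). -/
theorem bell_anticommuting_tradeoff {n : ℕ} (p : Fin n → Fin n → ℝ) (Q : ℝ)
    (hQ : ∀ (a b : ℕ) (A : Fin n → Matrix (Fin a) (Fin a) ℂ)
        (B : Fin n → Matrix (Fin b) (Fin b) ℂ),
        (∀ i, (A i).IsHermitian) → (∀ j, (B j).IsHermitian) →
        (∀ i, (1 - A i * A i).PosSemidef) → (∀ j, (1 - B j * B j).PosSemidef) →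
        ∀ ρ : Matrix (Fin a × Fin b) (Fin a × Fin b) ℂ, ρ.PosSemidef → ρ.trace = 1 →
        ((ρ * ∑ i, ∑ j, p i j • (A i ⊗ₖ B j)).trace).re ≤ Q)
    {a b : ℕ} (A : Fin n → Matrix (Fin a) (Fin a) ℂ)
    (B : Fin n → Matrix (Fin b) (Fin b) ℂ)
    (hA : ∀ i, (A i).IsHermitian) (hB : ∀ j, (B j).IsHermitian)
    (hAn : ∀ i, (1 - A i * A i).PosSemidef) (hBn : ∀ j, (1 - B j * B j).PosSemidef)
    (W : Matrix (Fin b) (Fin b) ℂ) (hW : W.IsHermitian)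
    (hWn : (1 - W * W).PosSemidef)
    (hanti : ∀ j, W * B j + B j * W = 0)
    (ρ : Matrix (Fin a × Fin b) (Fin a × Fin b) ℂ)
    (hρ : ρ.PosSemidef) (hρtr : ρ.trace = 1) :
    ((ρ * ∑ i, ∑ j, p i j • (A i ⊗ₖ B j)).trace).re ≤
      Q * Real.sqrt (1 - (((ρ * ((1 : Matrix (Fin a) (Fin a) ℂ) ⊗ₖ W)).trace).re) ^ 2) := by
  have hbound : ∀ σ : Matrix (Fin a × Fin b) (Fin a × Fin b) ℂ, σ.PosSemidef → σ.trace = 1 →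
      |(σ * bellOperator p A B).trace.re| ≤ Q := by
    intro σ hσ hσtr
    have hneg := hQ a b A (fun j => -B j) hA (fun j => (hB j).neg) hAn
      (fun j => by simpa only [neg_mul_neg] using hBn j) σ hσ hσtr
    rw [← bellOperator, bellOperator_neg_right, Matrix.mul_neg, trace_neg, Complex.neg_re] at hneg
    exact abs_le.mpr ⟨by linarith, hQ a b A B hA hB hAn hBn σ hσ hσtr⟩
  exact re_trace_mul_le_mul_sqrt_of_anticommute (isHermitian_bellOperator p hA hB)
    (isHermitian_one.kronecker hW) (bellOperator_mul_add_mul_eq_zero p hanti) hbound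
    hWn.one_sub_one_kronecker_mul_self hρ hρtr
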